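/- arXiv:2005.10512 — 5 statements merged into one kernel-verified Lean document; each statement's English description precedes it below -/
import Mathlib

section
/- Let G be a group with an involutive automorphism σ (playing the role of complex conjugation), let X be a G-set with a compatible involution σ on X (i.e., σ(g·x) = σ(g)·σ(x)), and let x ∈ X be fixed by σ. Let Gₓ be the stabilizer of x. Define φ̃ on {g·x : g ∈ G, σ(g·x) = g·x} by φ̃(g·x) = [g⁻¹·σ(g)], with values in the set of cocycles {s ∈ Gₓ : s·σ(s) = 1} modulo s₁ ~ s₂ iff s₁ = t⁻¹·s₂·σ(t) for t ∈ Gₓ. Then φ̃ is well defined: if g·x is fixed by σ then g⁻¹σ(g) ∈ Gₓ and is a cocycle, and the class does not depend on the choice of g with g·x given. -/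
/-!
Since `σ` fixes `x` and `g • x`, we get `σ(g) • x = σ(g • x) = g • x`, so `g⁻¹σ(g)` fixes `x`.
Two choices `g, g'` with `g • x = g' • x` differ by `t = g'⁻¹g ∈ Gₓ`, and
`g⁻¹σ(g) = t⁻¹ (g'⁻¹σ(g')) σ(t)` holds in any group.
-/

open MulAction

section

variable {G X : Type*} [Group G] [MulAction G X]

theorem inv_mul_mem_stabilizer_iff {g h : G} {x : X} :
    g⁻¹ * h ∈ stabilizer G x ↔ h • x = g • x := by
  rw [mem_stabilizer_iff, mul_smul, inv_smul_eq_iff]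

theorem inv_mul_map_mem_stabilizer (σG : G →* G) (σX : X → X)
    (hcomp : ∀ (g : G) (u : X), σX (g • u) = σG g • σX u)
    {x : X} (hx : σX x = x) {g : G} (hg : σX (g • x) = g • x) :
    g⁻¹ * σG g ∈ stabilizer G x := by
  refine inv_mul_mem_stabilizer_iff.mpr ?_
  calc σG g • x = σG g • σX x := by rw [hx]
    _ = σX (g • x) := (hcomp g x).symm
    _ = g • x := hg

end

section

variable {G : Type*} [Group G]

theorem inv_mul_map_mul_map_inv_mul_map (σ : G →* G) (hσ : ∀ g, σ (σ g) = g) (g : G) :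
    (g⁻¹ * σ g) * σ (g⁻¹ * σ g) = 1 := by
  simp [mul_assoc, hσ]

theorem inv_mul_map_eq_twisted_conj (σ : G →* G) (g g' : G) :
    g⁻¹ * σ g = (g'⁻¹ * g)⁻¹ * (g'⁻¹ * σ g') * σ (g'⁻¹ * g) := by
  simp [mul_assoc]

end

theorem stmt8_general {G X : Type*} [Group G] [MulAction G X]
    (σG : G →* G) (hσG : ∀ g, σG (σG g) = g)
    (σX : X → X)
    (hcomp : ∀ (g : G) (u : X), σX (g • u) = σG g • σX u)
    (x : X) (hx : σX x = x) :
    (∀ g : G, σX (g • x) = g • x →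
      g⁻¹ * σG g ∈ MulAction.stabilizer G x ∧
      (g⁻¹ * σG g) * σG (g⁻¹ * σG g) = 1) ∧
    (∀ g g' : G, σX (g • x) = g • x → σX (g' • x) = g' • x → g • x = g' • x →
      ∃ t ∈ MulAction.stabilizer G x, g⁻¹ * σG g = t⁻¹ * (g'⁻¹ * σG g') * σG t) :=
  ⟨fun g hg => ⟨inv_mul_map_mem_stabilizer σG σX hcomp hx hg,
      inv_mul_map_mul_map_inv_mul_map σG hσG g⟩,
    fun g g' _ _ hgg' => ⟨g'⁻¹ * g, inv_mul_mem_stabilizer_iff.mpr hgg',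
      inv_mul_map_eq_twisted_conj σG g g'⟩⟩

/-- Well-definedness of the Galois cocycle map `φ̃(g·x) = [g⁻¹·σ(g)]`: if `g·x` is fixed
by the involution then `g⁻¹σ(g)` lies in the stabilizer of `x` and is a cocycle, and its
cohomology class does not depend on the choice of `g` giving the same point `g·x`. -/
theorem stmt8 {G X : Type*} [Group G] [MulAction G X]
    (σG : G →* G) (hσG : ∀ g, σG (σG g) = g)
    (σX : X → X) (hσX : ∀ u, σX (σX u) = u)
    (hcomp : ∀ (g : G) (u : X), σX (g • u) = σG g • σX u)
    (x : X) (hx : σX x = x) :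
    (∀ g : G, σX (g • x) = g • x →
      g⁻¹ * σG g ∈ MulAction.stabilizer G x ∧
      (g⁻¹ * σG g) * σG (g⁻¹ * σG g) = 1) ∧
    (∀ g g' : G, σX (g • x) = g • x → σX (g' • x) = g' • x → g • x = g' • x →
      ∃ t ∈ MulAction.stabilizer G x, g⁻¹ * σG g = t⁻¹ * (g'⁻¹ * σG g') * σG t) :=
  stmt8_general σG hσG σX hcomp x hx
end

section
/- Suppose a group G with involution σ acts on a set X with a compatible involution σ, and the center Z(G) acts trivially on X. Let x ∈ X with stabilizer exactly Z(G), and suppose there exists h ∈ G with x = h·σ(x). Then h·σ(h) ∈ Z(G), and the maps θ(g) = h·σ(g)·h⁻¹ on G and s(u) = h·σ(u) on X are involutions satisfying the compatibility θ(g)·s(u) = s(g·u), and x is fixed by s. -/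
/-!
Applying `s(u) = h • σ(u)` twice is the action of `h * σ(h)`, and applying `θ` twice is
conjugation by `h * σ(h)`. Since `s` fixes `x`, the element `h * σ(h)` stabilises `x`, so it
is central; hence it acts trivially on `X` and by the identity on `G`, i.e. `s` and `θ` are
involutions.
-/

section TwistedInvolution

variable {G X : Type*} [Group G] [MulAction G X] (σG : G →* G) (σX : X → X)

theorem mul_map_conj_map_conj_inv {h : G} (hσG : ∀ g, σG (σG g) = g)
    (hc : h * σG h ∈ Subgroup.center G) (g : G) :
    h * σG (h * σG g * h⁻¹) * h⁻¹ = g := by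
  have hcomm : g * (h * σG h) = h * σG h * g := Subgroup.mem_center_iff.mp hc g
  simp only [map_mul, map_inv, hσG]
  calc h * (σG h * g * (σG h)⁻¹) * h⁻¹ = h * σG h * g * (h * σG h)⁻¹ := by group
    _ = g := by rw [← hcomm]; group

variable {σG σX}

theorem smul_map_smul_map (hσX : ∀ u, σX (σX u) = u)
    (hcomp : ∀ (g : G) (u : X), σX (g • u) = σG g • σX u) (h : G) (u : X) :
    h • σX (h • σX u) = (h * σG h) • u := by
  rw [hcomp, hσX, mul_smul]

theorem conj_map_smul_smul_map (hcomp : ∀ (g : G) (u : X), σX (g • u) = σG g • σX u)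
    (h g : G) (u : X) :
    (h * σG g * h⁻¹) • (h • σX u) = h • σX (g • u) := by
  rw [hcomp, mul_smul, mul_smul, inv_smul_smul]

end TwistedInvolution

/-- Algebraic core of the lifting theorem for neat real points: if the center acts
trivially, the stabilizer of `x` is exactly the center, and `x = h·σ(x)`, then
`h·σ(h)` is central, `θ(g) = h·σ(g)·h⁻¹` and `s(u) = h·σ(u)` are involutions, they
are compatible, and `x` is fixed by `s`. -/
theorem stmt12 {G X : Type*} [Group G] [MulAction G X]
    (σG : G →* G) (hσG : ∀ g, σG (σG g) = g)
    (σX : X → X) (hσX : ∀ u, σX (σX u) = u)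
    (hcomp : ∀ (g : G) (u : X), σX (g • u) = σG g • σX u)
    (hcenter : ∀ z ∈ Subgroup.center G, ∀ u : X, z • u = u)
    (x : X) (hstab : MulAction.stabilizer G x = Subgroup.center G)
    (h : G) (hx : x = h • σX x) :
    h * σG h ∈ Subgroup.center G ∧
    (∀ g : G, h * σG (h * σG g * h⁻¹) * h⁻¹ = g) ∧
    (∀ u : X, h • σX (h • σX u) = u) ∧
    (∀ (g : G) (u : X), (h * σG g * h⁻¹) • (h • σX u) = h • σX (g • u)) ∧
    h • σX x = x := by
  have hc : h * σG h ∈ Subgroup.center G := by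
    rw [← hstab, MulAction.mem_stabilizer_iff, ← smul_map_smul_map hσX hcomp, ← hx, ← hx]
  refine ⟨hc, mul_map_conj_map_conj_inv σG hσG hc, fun u => ?_,
    conj_map_smul_smul_map hcomp h, hx.symm⟩
  rw [smul_map_smul_map hσX hcomp, hcenter _ hc]
end

section
/- Let f: ℂ → ℝ be defined by f(z) = |z|⁴ − 8·Re(z³) + 18·|z|² − 27. If z = a + b + c where a, b, c are complex numbers of modulus 1 with a·b·c = 1 (i.e., z is the trace of a matrix in SU(3)), then f(z) ≤ 0. -/
/-!
With `|a| = |b| = |c| = 1` and `abc = 1`, conjugation inverts each of `a, b, c`, so the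
conjugate of `z = a + b + c` is `ab + bc + ca`. Hence `a, b, c` are the roots of
`X³ - zX² + z̄X - 1`, and `f(z)` is the real part of its discriminant `D²`, where
`D = (a - b)(b - c)(c - a)`. Conjugation sends `D` to `-D`, so `D` is purely imaginary and
`D² ≤ 0`.
-/

open ComplexConjugate

lemma discr_cubic_eq_sq {R : Type*} [CommRing R] (a b c : R) :
    (a + b + c) ^ 2 * (a * b + b * c + c * a) ^ 2 - 4 * (a + b + c) ^ 3 * (a * b * c)
      - 4 * (a * b + b * c + c * a) ^ 3 + 18 * (a + b + c) * (a * b + b * c + c * a) * (a * b * c)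
      - 27 * (a * b * c) ^ 2 = ((a - b) * (b - c) * (c - a)) ^ 2 := by
  ring

lemma Complex.conj_eq_of_norm_eq_one_of_mul_eq_one {a u : ℂ} (ha : ‖a‖ = 1)
    (h : a * u = 1) : conj a = u := by
  rw [← Complex.inv_eq_conj ha, inv_eq_of_mul_eq_one_right h]

lemma Complex.re_sq_nonpos_of_conj_eq_neg {z : ℂ} (h : conj z = -z) : (z ^ 2).re ≤ 0 := by
  have hre : z.re = 0 := by
    have := congrArg Complex.re h
    rw [Complex.conj_re, Complex.neg_re] at this
    linarith
  rw [pow_two, Complex.mul_re, hre]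
  nlinarith [sq_nonneg z.im]

lemma goldman_eq_re_discr (z : ℂ) :
    ‖z‖ ^ 4 - 8 * (z ^ 3).re + 18 * ‖z‖ ^ 2 - 27
      = (z ^ 2 * conj z ^ 2 - 4 * z ^ 3 - 4 * conj z ^ 3 + 18 * z * conj z - 27).re := by
  have hnorm : z * conj z = ((‖z‖ ^ 2 : ℝ) : ℂ) := by
    rw [Complex.mul_conj']
    norm_cast
  have hsq : z ^ 2 * conj z ^ 2 = ((‖z‖ ^ 4 : ℝ) : ℂ) := by
    rw [← mul_pow, hnorm]
    push_cast
    ring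
  have hcube : (conj z ^ 3).re = (z ^ 3).re := by rw [← map_pow, Complex.conj_re]
  rw [hsq, mul_assoc 18, hnorm]
  simp only [Complex.sub_re, Complex.add_re, Complex.mul_re, Complex.ofReal_re, Complex.re_ofNat,
    Complex.im_ofNat, hcube, zero_mul, sub_zero]
  ring

/-- Goldman's function `f(z) = |z|⁴ - 8·Re(z³) + 18·|z|² - 27` is nonpositive on traces
of matrices in `SU(3)`: if `z = a + b + c` with `|a| = |b| = |c| = 1` and `abc = 1`,
then `f(z) ≤ 0`. -/
theorem stmt14 (a b c : ℂ) (ha : ‖a‖ = 1) (hb : ‖b‖ = 1)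
    (hc : ‖c‖ = 1) (habc : a * b * c = 1) :
    ‖a + b + c‖ ^ 4 - 8 * (((a + b + c) ^ 3).re)
      + 18 * ‖a + b + c‖ ^ 2 - 27 ≤ 0 := by
  have hca : conj a = b * c :=
    Complex.conj_eq_of_norm_eq_one_of_mul_eq_one ha (by rw [← mul_assoc, habc])
  have hcb : conj b = c * a :=
    Complex.conj_eq_of_norm_eq_one_of_mul_eq_one hb (by rw [← habc]; ring)
  have hcc : conj c = a * b :=
    Complex.conj_eq_of_norm_eq_one_of_mul_eq_one hc (by rw [← habc]; ring)
  have hz : conj (a + b + c) = a * b + b * c + c * a := by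
    simp only [map_add, hca, hcb, hcc]
    ring
  have hD : conj ((a - b) * (b - c) * (c - a)) = -((a - b) * (b - c) * (c - a)) := by
    simp only [map_mul, map_sub, hca, hcb, hcc]
    linear_combination (-(a - b) * (b - c) * (c - a)) * habc
  have hdiscr := discr_cubic_eq_sq a b c
  simp only [habc, mul_one, one_pow] at hdiscr
  rw [goldman_eq_re_discr, hz, hdiscr]
  exact Complex.re_sq_nonpos_of_conj_eq_neg hD
end

section
/- Let f(z) = |z|⁴ − 8·Re(z³) + 18·|z|² − 27. If z ∈ ℂ satisfies f(z) ≤ 0, then all roots of the polynomial X³ − zX² + conj(z)·X − 1 have modulus 1. -/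
/-!
`f(z)` is the discriminant of the cubic `X³ - zX² + z̄X - 1`. Conjugating the equation shows that
with `x` its roots include `1 / x̄`; if `|x| ≠ 1` these are two distinct roots, and Vieta's formulas
force the third to be `x̄ / x`. The product of the pairwise differences of the roots
`x, 1 / x̄, x̄ / x` is then real and nonzero, so `f(z)` is a positive square.
-/

open ComplexConjugate

namespace Cubic

theorem discr_of_roots {R : Type*} [CommRing R] (x y w : R) :
    (⟨1, -(x + y + w), x * y + y * w + w * x, -(x * y * w)⟩ : Cubic R).discr =
      ((x - y) * (x - w) * (y - w)) ^ 2 := by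
  simp only [discr]
  ring

theorem eq_of_two_roots {K : Type*} [Field K] {b c d x y w : K} (hxy : x ≠ y)
    (hx : x ^ 3 + b * x ^ 2 + c * x + d = 0) (hy : y ^ 3 + b * y ^ 2 + c * y + d = 0)
    (hw : x + y + w = -b) :
    (⟨1, b, c, d⟩ : Cubic K) = ⟨1, -(x + y + w), x * y + y * w + w * x, -(x * y * w)⟩ := by
  have hc : c = x * y + y * w + w * x := by
    have h : (x - y) * (x ^ 2 + x * y + y ^ 2 + b * (x + y) + c) = 0 := by
      linear_combination hx - hy
    linear_combination (mul_eq_zero.mp h).resolve_left (sub_ne_zero.mpr hxy) - (x + y) * hw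
  have hd : d = -(x * y * w) := by
    linear_combination hx - x * hc - x ^ 2 * hw
  rw [hc, hd, hw, neg_neg]

end Cubic

noncomputable def goldman (z : ℂ) : ℝ := ‖z‖ ^ 4 - 8 * (z ^ 3).re + 18 * ‖z‖ ^ 2 - 27

/-- The characteristic polynomial of a matrix in `SU(2,1)` with trace `z`. -/
def goldmanCubic (z : ℂ) : Cubic ℂ := ⟨1, -z, conj z, -1⟩

theorem goldmanCubic_discr (z : ℂ) : (goldmanCubic z).discr = goldman z := by
  have hnorm : z * conj z = ((‖z‖ ^ 2 : ℝ) : ℂ) := by rw [Complex.mul_conj, Complex.sq_norm]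
  have hre : z ^ 3 + conj z ^ 3 = ((2 * (z ^ 3).re : ℝ) : ℂ) := by
    rw [← map_pow, Complex.add_conj]
  simp only [Cubic.discr, goldmanCubic, goldman]
  push_cast at hnorm hre ⊢
  linear_combination (z * conj z + ‖z‖ ^ 2 + 18) * hnorm - 4 * hre

section Roots

variable {z x : ℂ}

theorem ne_zero_of_goldman_root (hx : x ^ 3 - z * x ^ 2 + conj z * x - 1 = 0) : x ≠ 0 := by
  rintro rfl
  norm_num at hx

theorem inv_conj_goldman_root (hx : x ^ 3 - z * x ^ 2 + conj z * x - 1 = 0) :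
    (conj x)⁻¹ ^ 3 - z * (conj x)⁻¹ ^ 2 + conj z * (conj x)⁻¹ - 1 = 0 := by
  have hx0 : conj x ≠ 0 := (map_ne_zero _).mpr (ne_zero_of_goldman_root hx)
  have hc := congrArg conj hx
  simp only [map_sub, map_add, map_mul, map_pow, map_one, Complex.conj_conj, map_zero] at hc
  field_simp
  linear_combination -hc

theorem root_diff_prod_eq (hx : x ≠ 0) :
    (x - (conj x)⁻¹) * (x - conj x / x) * ((conj x)⁻¹ - conj x / x) =
      (((1 - ‖x‖ ^ 2) * (‖x‖ ^ 4 + ‖x‖ ^ 2 - 2 * (x ^ 3).re) / ‖x‖ ^ 4 : ℝ) : ℂ) := by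
  have hc : conj x ≠ 0 := (map_ne_zero _).mpr hx
  have hnorm : x * conj x = ((‖x‖ ^ 2 : ℝ) : ℂ) := by rw [Complex.mul_conj, Complex.sq_norm]
  have hre : x ^ 3 + conj x ^ 3 = ((2 * (x ^ 3).re : ℝ) : ℂ) := by
    rw [← map_pow, Complex.add_conj]
  calc _ = (x * conj x - 1) * (x ^ 3 + conj x ^ 3 - (x * conj x) ^ 2 - x * conj x) /
          (x * conj x) ^ 2 := by
        field_simp
        ring
    _ = _ := by
        rw [hnorm, hre]
        push_cast
        ring

theorem goldman_eq_sq_of_root (hx : x ^ 3 - z * x ^ 2 + conj z * x - 1 = 0) (hx1 : ‖x‖ ≠ 1) :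
    goldman z = ((1 - ‖x‖ ^ 2) * (‖x‖ ^ 4 + ‖x‖ ^ 2 - 2 * (x ^ 3).re) / ‖x‖ ^ 4) ^ 2 := by
  have hx0 := ne_zero_of_goldman_root hx
  have hxy : x ≠ (conj x)⁻¹ := by
    intro h
    have h1 := congrArg norm h
    rw [norm_inv, Complex.norm_conj] at h1
    field_simp at h1
    exact hx1 (by nlinarith [norm_nonneg x])
  have hcubic := Cubic.eq_of_two_roots (b := -z) (c := conj z) (d := -1)
    (w := z - x - (conj x)⁻¹) hxy (by linear_combination hx)
    (by linear_combination inv_conj_goldman_root hx) (by ring)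
  have hw : z - x - (conj x)⁻¹ = conj x / x := by
    have hprod := congrArg Cubic.d hcubic
    have hc0 : conj x ≠ 0 := (map_ne_zero _).mpr hx0
    simp only at hprod
    field_simp at hprod ⊢
    linear_combination hprod
  have hdiscr := goldmanCubic_discr z
  rw [goldmanCubic, hcubic, hw, Cubic.discr_of_roots, root_diff_prod_eq hx0] at hdiscr
  exact_mod_cast hdiscr.symm

end Roots

theorem sq_norm_mul_sq_norm_sub_one_le (x : ℂ) :
    ‖x‖ ^ 2 * (‖x‖ - 1) ^ 2 ≤ ‖x‖ ^ 4 + ‖x‖ ^ 2 - 2 * (x ^ 3).re := by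
  have := Complex.re_le_norm (x ^ 3)
  rw [norm_pow] at this
  nlinarith

/-- If Goldman's function `f(z) = |z|⁴ - 8·Re(z³) + 18·|z|² - 27` satisfies `f(z) ≤ 0`,
then all roots of `X³ - zX² + conj(z)·X - 1` have modulus 1. -/
theorem stmt15 (z : ℂ)
    (hf : ‖z‖ ^ 4 - 8 * ((z ^ 3).re) + 18 * ‖z‖ ^ 2 - 27 ≤ 0) :
    ∀ x : ℂ, x ^ 3 - z * x ^ 2 + (starRingEnd ℂ z) * x - 1 = 0 → ‖x‖ = 1 := by
  intro x hx
  by_contra hx1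
  have hx0 : ‖x‖ ≠ 0 := norm_ne_zero_iff.mpr (ne_zero_of_goldman_root hx)
  have hgap : 0 < ‖x‖ ^ 4 + ‖x‖ ^ 2 - 2 * (x ^ 3).re := by
    have : ‖x‖ - 1 ≠ 0 := sub_ne_zero.mpr hx1
    exact (sq_norm_mul_sq_norm_sub_one_le x).trans_lt' (by positivity)
  have hsq : 1 - ‖x‖ ^ 2 ≠ 0 := fun h => hx1 (by nlinarith [norm_nonneg x])
  have hpos : 0 < goldman z := by
    rw [goldman_eq_sq_of_root hx hx1]
    exact pow_two_pos_of_ne_zero (div_ne_zero (mul_ne_zero hsq hgap.ne') (pow_ne_zero 4 hx0))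
  exact hf.not_gt hpos
end

section
/- The trace map tr: SU(2,1) → ℂ is surjective: for every z ∈ ℂ there exists a matrix in SU(2,1) with trace z. (One can combine elliptic representatives diag(e^{ia}, e^{ib}, e^{ic}) with a+b+c = 0 for |arguments| achieving f(z) ≤ 0, and loxodromic representatives diag(λ, conj(λ)/λ, conj(λ)⁻¹) with 0 < |λ| < 1 for f(z) > 0.) -/
/-!
Every `z ∈ ℂ` can be written as `conj u ^ 2 + u * t` with `|u| = 1` and `t` real: for
`s = e^{iθ}` the imaginary part of `z s - s³` changes sign under `θ ↦ θ + π`, so it vanishes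
somewhere, and then `u = conj s`, `t = z s - s³` work. Since `SU(1,1)` contains a matrix `A` of
every real trace `t`, the matrix `conj u ^ 2 ⊕ u A` lies in `SU(2,1)` and has trace `z`.
-/

open Matrix ComplexConjugate

section OneTwoBlock

variable {R : Type*} [CommRing R]

def oneTwoBlock (c : R) (A : Matrix (Fin 2) (Fin 2) R) : Matrix (Fin 3) (Fin 3) R :=
  !![c, 0, 0; 0, A 0 0, A 0 1; 0, A 1 0, A 1 1]

theorem oneTwoBlock_mul (a b : R) (A B : Matrix (Fin 2) (Fin 2) R) :
    oneTwoBlock a A * oneTwoBlock b B = oneTwoBlock (a * b) (A * B) := by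
  ext i j
  fin_cases i <;> fin_cases j <;> simp [oneTwoBlock, mul_apply, Fin.sum_univ_succ]

theorem conjTranspose_oneTwoBlock [StarRing R] (c : R) (A : Matrix (Fin 2) (Fin 2) R) :
    (oneTwoBlock c A)ᴴ = oneTwoBlock (star c) Aᴴ := by
  ext i j
  fin_cases i <;> fin_cases j <;> simp [oneTwoBlock]

theorem oneTwoBlock_diagonal (a : R) (d : Fin 2 → R) :
    oneTwoBlock a (diagonal d) = diagonal ![a, d 0, d 1] := by
  ext i j
  fin_cases i <;> fin_cases j <;> simp [oneTwoBlock]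

theorem det_oneTwoBlock (c : R) (A : Matrix (Fin 2) (Fin 2) R) :
    (oneTwoBlock c A).det = c * A.det := by
  simp [oneTwoBlock, det_fin_three, det_fin_two]
  ring

theorem trace_oneTwoBlock (c : R) (A : Matrix (Fin 2) (Fin 2) R) :
    (oneTwoBlock c A).trace = c + A.trace := by
  simp [oneTwoBlock, trace_fin_three, trace_fin_two]
  ring

theorem conjTranspose_oneTwoBlock_mul_diagonal_mul [StarRing R] (c : R)
    (A : Matrix (Fin 2) (Fin 2) R) :
    (oneTwoBlock c A)ᴴ * diagonal ![1, 1, -1] * oneTwoBlock c A =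
      oneTwoBlock (star c * c) (Aᴴ * diagonal ![1, -1] * A) := by
  have hJ : (diagonal ![1, 1, -1] : Matrix (Fin 3) (Fin 3) R) = oneTwoBlock 1 (diagonal ![1, -1]) := by
    rw [oneTwoBlock_diagonal]
    rfl
  rw [hJ, conjTranspose_oneTwoBlock, oneTwoBlock_mul, oneTwoBlock_mul, mul_one]

end OneTwoBlock

theorem conjTranspose_smul_mul_mul_smul {n R : Type*} [Fintype n] [CommRing R] [StarRing R]
    (u : R) (A J : Matrix n n R) :
    (u • A)ᴴ * J * (u • A) = (star u * u) • (Aᴴ * J * A) := by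
  simp only [conjTranspose_smul, Matrix.smul_mul, Matrix.mul_smul, smul_smul]
  rw [mul_comm]

noncomputable def su11OfTrace (t : ℝ) : Matrix (Fin 2) (Fin 2) ℂ :=
  !![(t / 2 : ℝ) + Complex.I, (t / 2 : ℝ); (t / 2 : ℝ), (t / 2 : ℝ) - Complex.I]

theorem conjTranspose_su11OfTrace_mul_diagonal_mul (t : ℝ) :
    (su11OfTrace t)ᴴ * diagonal ![1, -1] * su11OfTrace t = diagonal ![1, -1] := by
  ext i j
  fin_cases i <;> fin_cases j <;>
    simp [su11OfTrace, mul_apply, Fin.sum_univ_two, map_div₀, map_ofNat] <;> ring_nf <;>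
    simp [Complex.I_sq]

theorem det_su11OfTrace (t : ℝ) : (su11OfTrace t).det = 1 := by
  simp [su11OfTrace, det_fin_two]
  ring_nf
  simp

theorem trace_su11OfTrace (t : ℝ) : (su11OfTrace t).trace = t := by
  simp [su11OfTrace, trace_fin_two]

theorem exists_eq_zero_of_map_eq_neg {f : ℝ → ℝ} (hf : Continuous f) {a b : ℝ}
    (hab : f b = -f a) : ∃ c, f c = 0 := by
  have h0 : (0 : ℝ) ∈ Set.uIcc (f a) (f b) := by
    rw [hab, Set.mem_uIcc]
    rcases le_total (f a) 0 with h | h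
    · exact Or.inl ⟨h, by linarith⟩
    · exact Or.inr ⟨by linarith, h⟩
  obtain ⟨c, -, hc⟩ := intermediate_value_uIcc hf.continuousOn h0
  exact ⟨c, hc⟩

theorem Complex.exists_eq_conj_sq_add_mul_ofReal (z : ℂ) :
    ∃ u : ℂ, conj u * u = 1 ∧ ∃ t : ℝ, z = conj u ^ 2 + u * t := by
  set f : ℝ → ℝ := fun θ => (z * exp (θ * I) - exp (θ * I) ^ 3).im
  obtain ⟨θ, hθ⟩ : ∃ θ, f θ = 0 :=
    exists_eq_zero_of_map_eq_neg (by fun_prop) (a := 0) (b := Real.pi) (by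
      simp [f, exp_pi_mul_I]
      ring_nf
      simp)
  set s := exp (θ * I)
  have hs : conj s * s = 1 := by
    rw [conj_mul', norm_exp_ofReal_mul_I]
    norm_num
  have hreal : z * s - s ^ 3 = ((z * s - s ^ 3).re : ℂ) :=
    ext (by simp) (by simp only [ofReal_im]; exact hθ)
  refine ⟨conj s, by rw [conj_conj, mul_comm, hs], (z * s - s ^ 3).re, ?_⟩
  rw [← hreal, conj_conj]
  linear_combination (s ^ 2 - z) * hs

/-- The trace map `tr : SU(2,1) → ℂ` is surjective: for every `z ∈ ℂ` there is a matrix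
of determinant 1 preserving the Hermitian form `diag(1,1,-1)` with trace `z`. -/
theorem stmt17 (z : ℂ) :
    ∃ M : Matrix (Fin 3) (Fin 3) ℂ,
      Mᴴ * (Matrix.diagonal ![1, 1, -1] : Matrix (Fin 3) (Fin 3) ℂ) * M =
        Matrix.diagonal ![1, 1, -1] ∧
      M.det = 1 ∧ Matrix.trace M = z := by
  obtain ⟨u, hu, t, rfl⟩ := Complex.exists_eq_conj_sq_add_mul_ofReal z
  refine ⟨oneTwoBlock (conj u ^ 2) (u • su11OfTrace t), ?_, ?_, ?_⟩
  · have hu2 : star (conj u ^ 2) * conj u ^ 2 = 1 := by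
      rw [star_pow, Complex.star_def, Complex.conj_conj, ← mul_pow, mul_comm, hu, one_pow]
    rw [conjTranspose_oneTwoBlock_mul_diagonal_mul, conjTranspose_smul_mul_mul_smul,
      conjTranspose_su11OfTrace_mul_diagonal_mul, hu2, Complex.star_def, hu, one_smul,
      oneTwoBlock_diagonal]
    rfl
  · rw [det_oneTwoBlock, det_smul, det_su11OfTrace, Fintype.card_fin, mul_one, ← mul_pow, hu,
      one_pow]
  · rw [trace_oneTwoBlock, trace_smul, trace_su11OfTrace, smul_eq_mul]
end
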